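/- arXiv:1506.07719 — 5 statements merged into one kernel-verified Lean document; each statement's English description precedes it below -/
import Mathlib

section
/- Suppose additionally that (P^ν)_{ii} = 0 for all i ∈ {1,…,N}. If z̄ = (z̄^1;…;z̄^N) ∈ ℝ^{Nn} is a fixed point of A_ν, then the set of strategies x̄^i := x^{i⋆}(z̄^i) is a network aggregative Nash equilibrium: for every i, J^i(x̄^i, Σ_{j=1}^N (P^ν)_{ij} x̄^j) = min_{y∈X^i} J^i(y, (P^ν)_{ii} y + Σ_{j≠i} (P^ν)_{ij} x̄^j). (Theorem 1, second part.) -/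
open Matrix Filter Topology Finset
open scoped Kronecker

noncomputable section

/-- Euclidean norm of a finitely-indexed real vector. -/
def eunorm {ι : Type*} [Fintype ι] (x : ι → ℝ) : ℝ := Real.sqrt (x ⬝ᵥ x)

/-- `S`-weighted norm `‖x‖_S = √(xᵀ S x)`. -/
def wnorm {ι : Type*} [Fintype ι] (S : Matrix ι ι ℝ) (x : ι → ℝ) : ℝ :=
  Real.sqrt (x ⬝ᵥ S.mulVec x)

/-- Quadratic cost `J(x,z) = q·xᵀQx + 2(Cz+c)ᵀx`. -/
def cost {n : ℕ} (Q C : Matrix (Fin n) (Fin n) ℝ) (qi : ℝ) (ci : Fin n → ℝ)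
    (x z : Fin n → ℝ) : ℝ :=
  qi * (x ⬝ᵥ Q.mulVec x) + 2 * ((C.mulVec z + ci) ⬝ᵥ x)

/-- `xst` is the optimal-response map: for every `z`, `xst z` minimizes the cost over `X`. -/
def IsOptResp {n : ℕ} (X : Set (Fin n → ℝ)) (Q C : Matrix (Fin n) (Fin n) ℝ)
    (qi : ℝ) (ci : Fin n → ℝ) (xst : (Fin n → ℝ) → (Fin n → ℝ)) : Prop :=
  ∀ z, xst z ∈ X ∧ ∀ y ∈ X, cost Q C qi ci (xst z) z ≤ cost Q C qi ci y z

/-- Stacked optimal responses `x⋆(z) = (x^{1⋆}(z^1);…;x^{N⋆}(z^N))`. -/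
def extMap {n N : ℕ} (xstar : Fin N → (Fin n → ℝ) → (Fin n → ℝ))
    (z : Fin N × Fin n → ℝ) : Fin N × Fin n → ℝ :=
  fun p => xstar p.1 (fun j => z (p.1, j)) p.2

/-- Extended aggregation map `A_ν(z) = (P^ν ⊗ I_n) x⋆(z)`. -/
def aggMap {n N : ℕ} (P : Matrix (Fin N) (Fin N) ℝ) (ν : ℕ)
    (xstar : Fin N → (Fin n → ℝ) → (Fin n → ℝ)) (z : Fin N × Fin n → ℝ) :
    Fin N × Fin n → ℝ :=
  ((P ^ ν) ⊗ₖ (1 : Matrix (Fin n) (Fin n) ℝ)).mulVec (extMap xstar z)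

/-- The matrix `(1/N)·1_N 1_Nᵀ` with all entries `1/N`. -/
def avgMat (N : ℕ) : Matrix (Fin N) (Fin N) ℝ := Matrix.of fun _ _ => (N : ℝ)⁻¹

/-- Mean-field aggregation map `A(z) = ((1/N)·1 1ᵀ ⊗ I_n) x⋆(z)`. -/
def meanAgg {n N : ℕ} (xstar : Fin N → (Fin n → ℝ) → (Fin n → ℝ))
    (z : Fin N × Fin n → ℝ) : Fin N × Fin n → ℝ :=
  ((avgMat N) ⊗ₖ (1 : Matrix (Fin n) (Fin n) ℝ)).mulVec (extMap xstar z)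

/-- Maximum-row-sum matrix norm `‖A‖_∞`. -/
def rowSumNorm {N : ℕ} (A : Matrix (Fin N) (Fin N) ℝ) : ℝ := ⨆ i, ∑ j, |A i j|

/-- Spectral norm (ℓ²-operator norm) of a real matrix. -/
def specNorm {ι : Type*} [Fintype ι] [DecidableEq ι] (P : Matrix ι ι ℝ) : ℝ :=
  ‖LinearMap.toContinuousLinearMap (Matrix.toEuclideanLin P)‖

/-- Map `A_{m,m}(z) = (P^m ⊗ I_n) x⋆((P^m ⊗ I_n) z)`. -/
def halfAgg {n N : ℕ} (P : Matrix (Fin N) (Fin N) ℝ) (m : ℕ)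
    (xstar : Fin N → (Fin n → ℝ) → (Fin n → ℝ)) (z : Fin N × Fin n → ℝ) :
    Fin N × Fin n → ℝ :=
  ((P ^ m) ⊗ₖ (1 : Matrix (Fin n) (Fin n) ℝ)).mulVec
    (extMap xstar (((P ^ m) ⊗ₖ (1 : Matrix (Fin n) (Fin n) ℝ)).mulVec z))

/-- if `(P^ν)_{ii} = 0` for all `i`, then the best responses to a fixed point of
`A_ν` form a network aggregative Nash equilibrium. -/
theorem fixedPoint_is_NA_Nash {n N ν : ℕ} (hn : 0 < n) (hN : 0 < N) (hν : 0 < ν)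
    (X : Fin N → Set (Fin n → ℝ))
    (hXne : ∀ i, (X i).Nonempty) (hXconv : ∀ i, Convex ℝ (X i))
    (hXcpt : ∀ i, IsCompact (X i))
    (Q C : Matrix (Fin n) (Fin n) ℝ) (hQ : Q.PosDef)
    (q : Fin N → ℝ) (hq : ∀ i, 0 < q i) (c : Fin N → Fin n → ℝ)
    (P : Matrix (Fin N) (Fin N) ℝ) (hPnn : ∀ i j, 0 ≤ P i j)
    (hPrs : ∀ i, ∑ j, P i j = 1)
    (hdiag : ∀ i, (P ^ ν) i i = 0)
    (xstar : Fin N → (Fin n → ℝ) → (Fin n → ℝ))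
    (hxstar : ∀ i, IsOptResp (X i) Q C (q i) (c i) (xstar i))
    (zbar : Fin N × Fin n → ℝ) (hfix : aggMap P ν xstar zbar = zbar)
    (xbar : Fin N → Fin n → ℝ)
    (hxbar : ∀ i, xbar i = xstar i (fun j => zbar (i, j))) :
    ∀ i, xbar i ∈ X i ∧ ∀ y ∈ X i,
      cost Q C (q i) (c i) (xbar i) (∑ j, (P ^ ν) i j • xbar j)
        ≤ cost Q C (q i) (c i) y
            ((P ^ ν) i i • y + ∑ j ∈ Finset.univ.erase i, (P ^ ν) i j • xbar j) := by
  intro i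
  have hz : (fun k => zbar (i, k)) = ∑ j, (P ^ ν) i j • xbar j := by
    funext k
    have := congrFun hfix (i, k)
    rw [← this]
    simp only [aggMap, Matrix.mulVec, dotProduct, Fintype.sum_prod_type,
      Matrix.kroneckerMap_apply, Matrix.one_apply, extMap, Finset.sum_apply,
      Pi.smul_apply, smul_eq_mul]
    refine Finset.sum_congr rfl fun j _ => ?_
    rw [← hxbar j]
    simp [mul_ite]
  have hsum : ∑ j, (P ^ ν) i j • xbar j
      = ∑ j ∈ Finset.univ.erase i, (P ^ ν) i j • xbar j := by
    rw [← Finset.add_sum_erase Finset.univ _ (Finset.mem_univ i), hdiag i, zero_smul,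
      zero_add]
  obtain ⟨hmem, hopt⟩ := hxstar i (fun k => zbar (i, k))
  refine ⟨by rw [hxbar i]; exact hmem, fun y hy => ?_⟩
  have harg : (P ^ ν) i i • y + ∑ j ∈ Finset.univ.erase i, (P ^ ν) i j • xbar j
      = fun k => zbar (i, k) := by
    rw [hdiag i, zero_smul, zero_add, ← hsum, ← hz]
  rw [harg, ← hz, hxbar i]
  exact hopt y hy
end
end

section
/- Suppose P is primitive and doubly stochastic. Let F := {z ∈ ℝ^{Nn} : z = A(z)} and, for ν ∈ ℕ, F_ν := {z ∈ ℝ^{Nn} : z = A_ν(z)}. Then for every ε > 0 there exists ν̄ > 0 such that for all ν ≥ ν̄, sup_{z ∈ F_ν} inf_{w ∈ F} ‖z − w‖ ≤ ε. (Lemma 2.) -/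
open Matrix Filter Topology Finset
open scoped Kronecker

noncomputable section

/-!
Every fixed point of `A_ν` is a `P^ν`-average of optimal responses, so all of them lie in one
compact ball. Each optimal response is the unique minimiser of a strictly convex cost over a
compact set, hence depends continuously on `z`; together with `P^ν → (1/N)·1 1ᵀ` this gives
`A_ν z' → A z` as `ν → ∞` and `z' → z`. A point of the ball at distance at least `ε` from the
fixed points of `A` is moved by `A`, hence by `A_ν` near it once `ν` is large, and compactness of
the ball makes the threshold on `ν` uniform.
-/

theorem Continuous.matrix_kronecker {X R l m n p : Type*} [TopologicalSpace X] [Mul R]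
    [TopologicalSpace R] [ContinuousMul R] {A : X → Matrix l m R} {B : X → Matrix n p R}
    (hA : Continuous A) (hB : Continuous B) : Continuous fun x => A x ⊗ₖ B x :=
  continuous_matrix fun i j => (hA.matrix_elem i.1 j.1).mul (hB.matrix_elem i.2 j.2)

namespace Matrix

theorem kronecker_mem_rowStochastic {R m n : Type*} [Fintype m] [DecidableEq m] [Fintype n]
    [DecidableEq n] [CommSemiring R] [PartialOrder R] [IsOrderedRing R]
    {A : Matrix m m R} {B : Matrix n n R} (hA : A ∈ rowStochastic R m)
    (hB : B ∈ rowStochastic R n) : A ⊗ₖ B ∈ rowStochastic R (m × n) := by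
  rw [mem_rowStochastic_iff_sum] at hA hB ⊢
  refine ⟨fun i j => mul_nonneg (hA.1 _ _) (hB.1 _ _), fun i => ?_⟩
  simp only [kroneckerMap_apply, Fintype.sum_prod_type, ← Finset.mul_sum, hB.2, mul_one, hA.2]

theorem norm_mulVec_le_of_mem_rowStochastic {m : Type*} [Fintype m] [DecidableEq m]
    {A : Matrix m m ℝ} (hA : A ∈ rowStochastic ℝ m) (v : m → ℝ) : ‖A *ᵥ v‖ ≤ ‖v‖ := by
  refine (pi_norm_le_iff_of_nonneg (norm_nonneg v)).2 fun i => ?_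
  calc ‖(A *ᵥ v) i‖ ≤ ∑ j, ‖A i j * v j‖ := norm_sum_le _ _
    _ ≤ ∑ j, A i j * ‖v‖ := by
        gcongr with j
        rw [norm_mul, Real.norm_of_nonneg (nonneg_of_mem_rowStochastic hA)]
        exact mul_le_mul_of_nonneg_left (norm_le_pi_norm v j) (nonneg_of_mem_rowStochastic hA)
    _ = ‖v‖ := by rw [← Finset.sum_mul, sum_row_of_mem_rowStochastic hA, one_mul]

end Matrix

theorem continuous_of_isMinOn_of_unique {α β γ : Type*} [TopologicalSpace α]
    [TopologicalSpace β] [TopologicalSpace γ] [Preorder γ] [OrderClosedTopology γ]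
    {K : Set β} (hK : IsCompact K) {f : β → α → γ} (hf : Continuous (Function.uncurry f))
    (huniq : ∀ a, ∀ x ∈ K, ∀ y ∈ K, IsMinOn (f · a) K x → IsMinOn (f · a) K y → x = y)
    {g : α → β} (hgK : ∀ a, g a ∈ K) (hg : ∀ a, IsMinOn (f · a) K (g a)) : Continuous g := by
  refine continuous_iff_continuousAt.2 fun a => hK.tendsto_nhds_of_unique_mapClusterPt
    (.of_forall hgK) fun x hxK hx => huniq a x hxK (g a) (hgK a) ?_ (hg a)
  have hxa : MapClusterPt (x, a) (𝓝 a) fun b => (g b, b) := by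
    rw [((𝓝 x).basis_sets.prod_nhds (𝓝 a).basis_sets).mapClusterPt_iff_frequently]
    rintro ⟨s, t⟩ ⟨hs, ht⟩
    exact (hx.frequently hs).and_eventually ht
  intro y hy
  exact (isClosed_le hf (hf.comp (continuous_const.prodMk continuous_snd))).mem_of_mapClusterPt
    hxa (.of_forall fun b => hg b hy)

open Function in
theorem eventually_fixedPoints_subset {ι E : Type*} [TopologicalSpace E] [T2Space E]
    {l : Filter ι} {T : ι → E → E} {T₀ : E → E} {K V : Set E} (hK : IsCompact K)
    (hV : IsOpen V) (hTK : ∀ i, fixedPoints (T i) ⊆ K)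
    (hT : ∀ z, Tendsto (fun p : ι × E => T p.1 p.2) (l ×ˢ 𝓝 z) (𝓝 (T₀ z)))
    (hT₀V : fixedPoints T₀ ⊆ V) : ∀ᶠ i in l, fixedPoints (T i) ⊆ V := by
  -- A point of `K \ V` is moved by `T₀`, hence by `T i` near it for `i` far along `l`.
  have hmoved : ∀ᶠ p in l ×ˢ 𝓝ˢ (K \ V), T p.1 p.2 ≠ p.2 :=
    (hK.diff hV).mem_prod_nhdsSet_of_forall fun z hz =>
      ((hT z).prodMk_nhds tendsto_snd).eventually
        (isClosed_diagonal.isOpen_compl.mem_nhds fun h => hz.2 (hT₀V h))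
  filter_upwards [hmoved.curry] with i hi z hz
  by_contra hzV
  exact hi.self_of_nhdsSet z ⟨hTK i hz, hzV⟩ hz

theorem mul_cost_add_mul_cost {n : ℕ} (Q C : Matrix (Fin n) (Fin n) ℝ) (qi : ℝ)
    (ci z x y : Fin n → ℝ) {a b : ℝ} (hab : a + b = 1) :
    a * cost Q C qi ci x z + b * cost Q C qi ci y z =
      cost Q C qi ci (a • x + b • y) z + qi * a * b * ((x - y) ⬝ᵥ Q *ᵥ (x - y)) := by
  obtain rfl : b = 1 - a := by linarith
  simp only [cost, mulVec_add, mulVec_sub, mulVec_smul, dotProduct_add, add_dotProduct,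
    dotProduct_sub, sub_dotProduct, dotProduct_smul, smul_dotProduct, smul_eq_mul]
  ring

theorem strictConvexOn_cost {n : ℕ} {s : Set (Fin n → ℝ)} (hs : Convex ℝ s)
    {Q : Matrix (Fin n) (Fin n) ℝ} (hQ : Q.PosDef) (C : Matrix (Fin n) (Fin n) ℝ) {qi : ℝ}
    (hqi : 0 < qi) (ci z : Fin n → ℝ) : StrictConvexOn ℝ s fun x => cost Q C qi ci x z := by
  refine ⟨hs, fun x _ y _ hxy a b ha hb hab => ?_⟩
  have hquad : 0 < (x - y) ⬝ᵥ Q *ᵥ (x - y) := hQ.dotProduct_mulVec_pos (sub_ne_zero.2 hxy)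
  have hgap := mul_cost_add_mul_cost Q C qi ci z x y hab
  simp only [smul_eq_mul]
  nlinarith [mul_pos (mul_pos (mul_pos hqi ha) hb) hquad]

theorem continuous_cost {n : ℕ} (Q C : Matrix (Fin n) (Fin n) ℝ) (qi : ℝ) (ci : Fin n → ℝ) :
    Continuous (Function.uncurry (cost Q C qi ci)) := by
  unfold Function.uncurry cost
  fun_prop

theorem IsOptResp.continuous {n : ℕ} {X : Set (Fin n → ℝ)} (hXconv : Convex ℝ X)
    (hXcpt : IsCompact X) {Q : Matrix (Fin n) (Fin n) ℝ} (hQ : Q.PosDef)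
    {C : Matrix (Fin n) (Fin n) ℝ} {qi : ℝ} (hqi : 0 < qi) {ci : Fin n → ℝ}
    {xst : (Fin n → ℝ) → (Fin n → ℝ)} (h : IsOptResp X Q C qi ci xst) : Continuous xst :=
  continuous_of_isMinOn_of_unique hXcpt (continuous_cost Q C qi ci)
    (fun z _ hx _ hy hxm hym =>
      (strictConvexOn_cost hXconv hQ C hqi ci z).eq_of_isMinOn hxm hym hx hy)
    (fun z => (h z).1) fun z => isMinOn_iff.2 (h z).2

theorem continuous_extMap {n N : ℕ} {xstar : Fin N → (Fin n → ℝ) → (Fin n → ℝ)}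
    (hxstar : ∀ i, Continuous (xstar i)) : Continuous (extMap xstar) :=
  continuous_pi fun p => (continuous_apply p.2).comp
    ((hxstar p.1).comp (continuous_pi fun j => continuous_apply (p.1, j)))

theorem exists_norm_extMap_le {n N : ℕ} {X : Fin N → Set (Fin n → ℝ)}
    (hXcpt : ∀ i, IsCompact (X i)) {xstar : Fin N → (Fin n → ℝ) → (Fin n → ℝ)}
    (hxstar : ∀ i z, xstar i z ∈ X i) : ∃ R, ∀ z, ‖extMap xstar z‖ ≤ R := by
  obtain ⟨R, hR, hXR⟩ := (isCompact_iUnion hXcpt).isBounded.exists_pos_norm_le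
  refine ⟨R, fun z => (pi_norm_le_iff_of_nonneg hR.le).2 fun p => ?_⟩
  exact (norm_le_pi_norm _ p.2).trans (hXR _ (Set.mem_iUnion_of_mem p.1 (hxstar p.1 _)))

theorem norm_aggMap_le {n N : ℕ} {P : Matrix (Fin N) (Fin N) ℝ}
    (hP : P ∈ rowStochastic ℝ (Fin N)) (ν : ℕ) {xstar : Fin N → (Fin n → ℝ) → (Fin n → ℝ)}
    {R : ℝ} (hR : ∀ z, ‖extMap xstar z‖ ≤ R) (z : Fin N × Fin n → ℝ) :
    ‖aggMap P ν xstar z‖ ≤ R :=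
  (norm_mulVec_le_of_mem_rowStochastic
    (kronecker_mem_rowStochastic (pow_mem hP ν) (one_mem _)) _).trans (hR z)

theorem tendsto_aggMap_meanAgg {n N : ℕ} {P : Matrix (Fin N) (Fin N) ℝ}
    (hP : Tendsto (fun ν : ℕ => P ^ ν) atTop (𝓝 (avgMat N)))
    {xstar : Fin N → (Fin n → ℝ) → (Fin n → ℝ)} (hxstar : ∀ i, Continuous (xstar i))
    (z : Fin N × Fin n → ℝ) :
    Tendsto (fun p : ℕ × (Fin N × Fin n → ℝ) => aggMap P p.1 xstar p.2) (atTop ×ˢ 𝓝 z)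
      (𝓝 (meanAgg xstar z)) := by
  have hmul : Continuous fun p : Matrix (Fin N) (Fin N) ℝ × (Fin N × Fin n → ℝ) =>
      (p.1 ⊗ₖ (1 : Matrix (Fin n) (Fin n) ℝ)) *ᵥ p.2 :=
    (continuous_fst.matrix_kronecker continuous_const).matrix_mulVec continuous_snd
  have hargs : Tendsto (fun p : ℕ × (Fin N × Fin n → ℝ) => (P ^ p.1, extMap xstar p.2))
      (atTop ×ˢ 𝓝 z) (𝓝 (avgMat N, extMap xstar z)) :=
    (hP.comp tendsto_fst).prodMk_nhds (((continuous_extMap hxstar).tendsto z).comp tendsto_snd)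
  exact ((hmul.tendsto _).comp hargs).congr fun _ => rfl

theorem continuous_eunorm {ι : Type*} [Fintype ι] : Continuous (eunorm : (ι → ℝ) → ℝ) :=
  Real.continuous_sqrt.comp (continuous_id.dotProduct continuous_id)

theorem fixedPoints_aggMap_close_to_fixedPoints_meanAgg_general {n N : ℕ}
    (X : Fin N → Set (Fin n → ℝ))
    (hXconv : ∀ i, Convex ℝ (X i))
    (hXcpt : ∀ i, IsCompact (X i))
    (Q C : Matrix (Fin n) (Fin n) ℝ) (hQ : Q.PosDef)
    (q : Fin N → ℝ) (hq : ∀ i, 0 < q i) (c : Fin N → Fin n → ℝ)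
    (P : Matrix (Fin N) (Fin N) ℝ) (hPnn : ∀ i j, 0 ≤ P i j)
    (hPrs : ∀ i, ∑ j, P i j = 1)
    (hlim : ∀ i j, Tendsto (fun ν : ℕ => (P ^ ν) i j) atTop (𝓝 ((N : ℝ)⁻¹)))
    (xstar : Fin N → (Fin n → ℝ) → (Fin n → ℝ))
    (hxstar : ∀ i, IsOptResp (X i) Q C (q i) (c i) (xstar i)) :
    ∀ ε > (0 : ℝ), ∃ ν' : ℕ, 0 < ν' ∧ ∀ ν ≥ ν',
      ∀ z : Fin N × Fin n → ℝ, aggMap P ν xstar z = z →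
        sInf {d : ℝ | ∃ w : Fin N × Fin n → ℝ, meanAgg xstar w = w ∧ d = eunorm (z - w)}
          ≤ ε := by
  intro ε hε
  have hcont i : Continuous (xstar i) := (hxstar i).continuous (hXconv i) (hXcpt i) hQ (hq i)
  have hPlim : Tendsto (fun ν : ℕ => P ^ ν) atTop (𝓝 (avgMat N)) :=
    tendsto_pi_nhds.2 fun i => tendsto_pi_nhds.2 (hlim i)
  obtain ⟨R, hR⟩ := exists_norm_extMap_le hXcpt fun i z => (hxstar i z).1
  set V := ⋃ w ∈ Function.fixedPoints (meanAgg xstar), {z | eunorm (z - w) < ε}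
  have hV : IsOpen V := isOpen_biUnion fun w _ =>
    isOpen_lt (continuous_eunorm.comp (continuous_sub_right w)) continuous_const
  have hFV : Function.fixedPoints (meanAgg xstar) ⊆ V := fun w hw =>
    Set.mem_biUnion hw (by simpa [eunorm] using hε)
  have hclose : ∀ᶠ ν in atTop, Function.fixedPoints (aggMap P ν xstar) ⊆ V :=
    eventually_fixedPoints_subset (isCompact_closedBall 0 R) hV
      (fun ν z hz => mem_closedBall_zero_iff.2 (hz ▸ norm_aggMap_le
        (mem_rowStochastic_iff_sum.2 ⟨hPnn, hPrs⟩) ν hR z))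
      (tendsto_aggMap_meanAgg hPlim hcont) hFV
  obtain ⟨ν', hν'⟩ := eventually_atTop.1 (hclose.and (eventually_gt_atTop 0))
  refine ⟨ν', (hν' ν' le_rfl).2, fun ν hν z hz => ?_⟩
  obtain ⟨w, hw, hzw⟩ := Set.mem_iUnion₂.1 ((hν' ν hν).1 hz)
  refine (csInf_le ?_ ?_).trans hzw.le
  · exact ⟨0, by rintro d ⟨w, -, rfl⟩; exact Real.sqrt_nonneg _⟩
  · exact ⟨w, hw, rfl⟩

/-- Lemma 2: for every `ε > 0` there is `ν̄ > 0` such that for all `ν ≥ ν̄`,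
every fixed point of `A_ν` is within distance `ε` of the fixed-point set of `A`. -/
theorem fixedPoints_aggMap_close_to_fixedPoints_meanAgg {n N : ℕ} (hn : 0 < n) (hN : 0 < N)
    (X : Fin N → Set (Fin n → ℝ))
    (hXne : ∀ i, (X i).Nonempty) (hXconv : ∀ i, Convex ℝ (X i))
    (hXcpt : ∀ i, IsCompact (X i))
    (Q C : Matrix (Fin n) (Fin n) ℝ) (hQ : Q.PosDef)
    (q : Fin N → ℝ) (hq : ∀ i, 0 < q i) (c : Fin N → Fin n → ℝ)
    (P : Matrix (Fin N) (Fin N) ℝ) (hPnn : ∀ i j, 0 ≤ P i j)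
    (hPrs : ∀ i, ∑ j, P i j = 1)
    (hlim : ∀ i j, Tendsto (fun ν : ℕ => (P ^ ν) i j) atTop (𝓝 ((N : ℝ)⁻¹)))
    (xstar : Fin N → (Fin n → ℝ) → (Fin n → ℝ))
    (hxstar : ∀ i, IsOptResp (X i) Q C (q i) (c i) (xstar i)) :
    ∀ ε > (0 : ℝ), ∃ ν' : ℕ, 0 < ν' ∧ ∀ ν ≥ ν',
      ∀ z : Fin N × Fin n → ℝ, aggMap P ν xstar z = z →
        sInf {d : ℝ | ∃ w : Fin N × Fin n → ℝ, meanAgg xstar w = w ∧ d = eunorm (z - w)}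
          ≤ ε :=
  fixedPoints_aggMap_close_to_fixedPoints_meanAgg_general X hXconv hXcpt Q C hQ q hq c P hPnn hPrs
    hlim xstar hxstar
end
end

section
/- Let X ⊂ ℝ^n be a convex compact set containing each X^i, and set D := max_{x∈X} ‖x‖. Suppose L_x > 0 satisfies ‖x^{i⋆}(z) − x^{i⋆}(w)‖ ≤ L_x ‖z − w‖ for all i and all z, w ∈ ℝ^n, and L_J > 0 satisfies |J^i(x_a,z_a) − J^i(x_b,z_b)| ≤ L_J (‖x_a − x_b‖ + ‖z_a − z_b‖) for all i and all x_a, x_b, z_a, z_b ∈ X. Set K := 2 L_J (L_x + 1) D. If z̄ = (z̄^1;…;z̄^N) is a fixed point of A_ν and x̄^i := x^{i⋆}(z̄^i), then for every i, J^i(x̄^i, (1/N) Σ_{j=1}^N x̄^j) ≤ min_{y∈X^i} J^i(y, (1/N)(y + Σ_{j≠i} x̄^j)) + ε, where ε := K (‖P^ν − (1/N)·1_N 1_Nᵀ‖_∞ + 1/N) and ‖·‖_∞ is the maximum-row-sum matrix norm. (Quantitative form of Theorem 2, established in its proof.) -/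
open Matrix Filter Topology Finset
open scoped Kronecker

noncomputable section

/-! The fixed point makes `z̄ⁱ = ∑ⱼ (P^ν)ᵢⱼ x̄ʲ` a convex combination of the best responses, at
distance at most `‖P^ν − (1/N)·1 1ᵀ‖_∞ D` from their mean, while a unilateral deviation of player
`i` moves the mean by at most `2D/N`. Since `x̄ⁱ` is optimal against `z̄ⁱ`, the Lipschitz bound on
the cost pays `L_J` times these two distances for replacing `z̄ⁱ` by the mean on either side. -/

section EuclideanNorm

variable {ι : Type*} [Fintype ι]

lemma eunorm_eq_norm (x : ι → ℝ) :
    eunorm x = ‖(WithLp.linearEquiv 2 ℝ (ι → ℝ)).symm x‖ := by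
  rw [eunorm, EuclideanSpace.norm_eq]
  simp [dotProduct, sq]

lemma eunorm_nonneg (x : ι → ℝ) : 0 ≤ eunorm x :=
  Real.sqrt_nonneg _

@[simp]
lemma eunorm_zero : eunorm (0 : ι → ℝ) = 0 := by
  simp [eunorm]

lemma eunorm_smul (a : ℝ) (x : ι → ℝ) : eunorm (a • x) = |a| * eunorm x := by
  rw [eunorm_eq_norm, eunorm_eq_norm, map_smul, norm_smul, Real.norm_eq_abs]

lemma eunorm_sub_comm (x y : ι → ℝ) : eunorm (x - y) = eunorm (y - x) := by
  rw [eunorm_eq_norm, eunorm_eq_norm, map_sub, map_sub, norm_sub_rev]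

lemma eunorm_sub_le_add (x y : ι → ℝ) : eunorm (x - y) ≤ eunorm x + eunorm y := by
  simpa only [eunorm_eq_norm, map_sub] using norm_sub_le _ _

lemma eunorm_sub_le_sub_add_sub (x y z : ι → ℝ) :
    eunorm (x - z) ≤ eunorm (x - y) + eunorm (y - z) := by
  simpa only [eunorm_eq_norm, map_sub] using norm_sub_le_norm_sub_add_norm_sub _ _ _

lemma eunorm_sum_smul_sub_sum_smul_le {κ : Type*} [Fintype κ] (w w' : κ → ℝ)
    {v : κ → ι → ℝ} {D : ℝ} (hv : ∀ j, eunorm (v j) ≤ D) :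
    eunorm (∑ j, w j • v j - ∑ j, w' j • v j) ≤ (∑ j, |w j - w' j|) * D := by
  rw [← Finset.sum_sub_distrib, Finset.sum_mul, eunorm_eq_norm, map_sum]
  refine (norm_sum_le _ _).trans (Finset.sum_le_sum fun j _ => ?_)
  rw [← sub_smul, ← eunorm_eq_norm, eunorm_smul]
  exact mul_le_mul_of_nonneg_left (hv j) (abs_nonneg _)

end EuclideanNorm

lemma sum_abs_le_rowSumNorm {N : ℕ} (A : Matrix (Fin N) (Fin N) ℝ) (i : Fin N) :
    ∑ j, |A i j| ≤ rowSumNorm A :=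
  le_ciSup (f := fun i => ∑ j, |A i j|) (Set.finite_range _).bddAbove i

lemma rowSumNorm_nonneg {N : ℕ} (A : Matrix (Fin N) (Fin N) ℝ) : 0 ≤ rowSumNorm A :=
  Real.iSup_nonneg fun _ => Finset.sum_nonneg fun _ _ => abs_nonneg _

lemma Matrix.kronecker_one_mulVec_apply {R m k : Type*} [CommSemiring R] [Fintype m] [Fintype k]
    [DecidableEq k] (A : Matrix m m R) (v : m × k → R) (i : m) (l : k) :
    ((A ⊗ₖ (1 : Matrix k k R)) *ᵥ v) (i, l) = ∑ j, A i j * v (j, l) := by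
  simp [mulVec, dotProduct, Fintype.sum_prod_type, one_apply]

lemma aggMap_block {n N : ℕ} (P : Matrix (Fin N) (Fin N) ℝ) (ν : ℕ)
    (xstar : Fin N → (Fin n → ℝ) → (Fin n → ℝ)) (z : Fin N × Fin n → ℝ) (i : Fin N) :
    (fun l => aggMap P ν xstar z (i, l)) = ∑ j, (P ^ ν) i j • xstar j (fun l => z (j, l)) := by
  ext l
  simp [aggMap, kronecker_one_mulVec_apply, extMap]

section Mean

variable {N : ℕ} {ι : Type*} [Fintype ι]

lemma Convex.inv_natCast_smul_sum_mem {E : Type*} [AddCommGroup E] [Module ℝ E] {s : Set E}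
    (hs : Convex ℝ s) (hN : 0 < N) {v : Fin N → E} (hv : ∀ j, v j ∈ s) :
    (N : ℝ)⁻¹ • ∑ j, v j ∈ s := by
  simpa [Finset.centerMass] using
    hs.centerMass_mem (t := Finset.univ) (w := fun _ => (1 : ℝ)) (by simp) (by simpa using hN)
      (fun j _ => hv j)

lemma Convex.inv_natCast_smul_add_sum_erase_mem {E : Type*} [AddCommGroup E] [Module ℝ E]
    {s : Set E} (hs : Convex ℝ s) (hN : 0 < N) {v : Fin N → E} (hv : ∀ j, v j ∈ s)
    (i : Fin N) {y : E} (hy : y ∈ s) :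
    (N : ℝ)⁻¹ • (y + ∑ j ∈ Finset.univ.erase i, v j) ∈ s := by
  have hsum : y + ∑ j ∈ Finset.univ.erase i, v j = ∑ j, Function.update v i y j := by
    rw [Finset.sum_update_of_mem (Finset.mem_univ i), Finset.sdiff_singleton_eq_erase]
  rw [hsum]
  refine hs.inv_natCast_smul_sum_mem hN fun j => ?_
  rcases eq_or_ne j i with rfl | hj
  · simpa using hy
  · simpa [hj] using hv j

lemma eunorm_inv_natCast_smul_sum_sub_le (A : Matrix (Fin N) (Fin N) ℝ) (i : Fin N)
    {v : Fin N → ι → ℝ} {D : ℝ} (hD : 0 ≤ D) (hv : ∀ j, eunorm (v j) ≤ D) :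
    eunorm ((N : ℝ)⁻¹ • ∑ j, v j - ∑ j, A i j • v j) ≤ rowSumNorm (A - avgMat N) * D := by
  rw [Finset.smul_sum]
  refine (eunorm_sum_smul_sub_sum_smul_le _ _ hv).trans
    (mul_le_mul_of_nonneg_right (le_of_eq_of_le ?_ (sum_abs_le_rowSumNorm _ i)) hD)
  simp [avgMat, abs_sub_comm]

lemma eunorm_inv_natCast_smul_sum_sub_deviation_le {v : Fin N → ι → ℝ} (i : Fin N)
    {y : ι → ℝ} {D : ℝ} (hvi : eunorm (v i) ≤ D) (hy : eunorm y ≤ D) :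
    eunorm ((N : ℝ)⁻¹ • ∑ j, v j - (N : ℝ)⁻¹ • (y + ∑ j ∈ Finset.univ.erase i, v j))
      ≤ (N : ℝ)⁻¹ * (2 * D) := by
  rw [← Finset.add_sum_erase _ _ (Finset.mem_univ i), ← smul_sub, add_sub_add_right_eq_sub,
    eunorm_smul, abs_of_nonneg (by positivity)]
  gcongr
  linarith [eunorm_sub_le_add (v i) y]

end Mean

lemma le_add_of_le_of_lipschitz {ι : Type*} [Fintype ι] {J : (ι → ℝ) → (ι → ℝ) → ℝ}
    {S : Set (ι → ℝ)} {L : ℝ}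
    (hJ : ∀ xa ∈ S, ∀ xb ∈ S, ∀ za ∈ S, ∀ zb ∈ S,
      |J xa za - J xb zb| ≤ L * (eunorm (xa - xb) + eunorm (za - zb)))
    {x y z a b : ι → ℝ} (hx : x ∈ S) (hy : y ∈ S) (hz : z ∈ S) (ha : a ∈ S) (hb : b ∈ S)
    (hopt : J x z ≤ J y z) :
    J x a ≤ J y b + L * (eunorm (a - z) + eunorm (z - b)) := by
  have hxa := (abs_le.1 (hJ x hx x hx a ha z hz)).2
  have hyb := (abs_le.1 (hJ y hy y hy z hz b hb)).2
  simp only [sub_self, eunorm_zero, zero_add] at hxa hyb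
  linarith

theorem fixedPoint_is_eps_MF_Nash_general {n N ν : ℕ}
    (X : Fin N → Set (Fin n → ℝ))
    (Q C : Matrix (Fin n) (Fin n) ℝ)
    (q : Fin N → ℝ) (c : Fin N → Fin n → ℝ)
    (P : Matrix (Fin N) (Fin N) ℝ) (hPnn : ∀ i j, 0 ≤ P i j)
    (hPrs : ∀ i, ∑ j, P i j = 1)
    (xstar : Fin N → (Fin n → ℝ) → (Fin n → ℝ))
    (hxstar : ∀ i, IsOptResp (X i) Q C (q i) (c i) (xstar i))
    (Xbig : Set (Fin n → ℝ)) (hXbigconv : Convex ℝ Xbig)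
    (hXsub : ∀ i, X i ⊆ Xbig)
    (D : ℝ) (hD : ∀ x ∈ Xbig, eunorm x ≤ D)
    (Lx : ℝ) (hLx0 : 0 < Lx)
    (LJ : ℝ) (hLJ0 : 0 < LJ)
    (hLJ : ∀ i, ∀ xa ∈ Xbig, ∀ xb ∈ Xbig, ∀ za ∈ Xbig, ∀ zb ∈ Xbig,
      |cost Q C (q i) (c i) xa za - cost Q C (q i) (c i) xb zb|
        ≤ LJ * (eunorm (xa - xb) + eunorm (za - zb)))
    (zbar : Fin N × Fin n → ℝ) (hfix : aggMap P ν xstar zbar = zbar)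
    (xbar : Fin N → Fin n → ℝ)
    (hxbar : ∀ i, xbar i = xstar i (fun j => zbar (i, j))) :
    ∀ i, ∀ y ∈ X i,
      cost Q C (q i) (c i) (xbar i) ((N : ℝ)⁻¹ • ∑ j, xbar j)
        ≤ cost Q C (q i) (c i) y
            ((N : ℝ)⁻¹ • (y + ∑ j ∈ Finset.univ.erase i, xbar j))
          + 2 * LJ * (Lx + 1) * D * (rowSumNorm (P ^ ν - avgMat N) + (N : ℝ)⁻¹) := by
  intro i y hy
  have hyB : y ∈ Xbig := hXsub i hy
  have hxbarB j : xbar j ∈ Xbig := hXsub j (hxbar j ▸ (hxstar j _).1)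
  have hD0 : 0 ≤ D := (eunorm_nonneg y).trans (hD y hyB)
  have hzbar : (fun l => zbar (i, l)) = ∑ j, (P ^ ν) i j • xbar j := by
    conv_lhs => rw [← hfix]
    simp only [aggMap_block, ← hxbar]
  have hPν : P ^ ν ∈ rowStochastic ℝ (Fin N) :=
    pow_mem (mem_rowStochastic_iff_sum.2 ⟨hPnn, hPrs⟩) ν
  have hzbarB : (fun l => zbar (i, l)) ∈ Xbig := hzbar ▸ hXbigconv.sum_mem
    (fun j _ => nonneg_of_mem_rowStochastic hPν) (sum_row_of_mem_rowStochastic hPν i)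
    (fun j _ => hxbarB j)
  have hmeanB := hXbigconv.inv_natCast_smul_sum_mem i.pos hxbarB
  have hdevB := hXbigconv.inv_natCast_smul_add_sum_erase_mem i.pos hxbarB i hyB
  have hmean := eunorm_inv_natCast_smul_sum_sub_le (P ^ ν) i hD0 fun j => hD _ (hxbarB j)
  have hdev := eunorm_inv_natCast_smul_sum_sub_deviation_le i (hD _ (hxbarB i)) (hD y hyB)
  have hopt := hxbar i ▸ (hxstar i (fun l => zbar (i, l))).2 y hy
  rw [← hzbar] at hmean
  set δ := rowSumNorm (P ^ ν - avgMat N)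
  have hzbar_dev := (eunorm_sub_le_sub_add_sub _ _ _).trans
    (add_le_add (eunorm_sub_comm _ ((N : ℝ)⁻¹ • ∑ j, xbar j) ▸ hmean) hdev)
  have hδ : 0 ≤ δ := rowSumNorm_nonneg _
  calc _ ≤ _ := le_add_of_le_of_lipschitz (hLJ i) (hxbarB i) hyB hzbarB hmeanB hdevB hopt
    _ ≤ _ + LJ * (δ * D + (δ * D + (N : ℝ)⁻¹ * (2 * D))) := by gcongr
    _ = _ + 2 * LJ * 1 * D * (δ + (N : ℝ)⁻¹) := by ring
    _ ≤ _ := by gcongr; linarith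

/-- quantitative ε-Nash property of the best responses to a fixed point of `A_ν`,
with `ε = 2 L_J (L_x + 1) D (‖P^ν − (1/N)·1 1ᵀ‖_∞ + 1/N)`. -/
theorem fixedPoint_is_eps_MF_Nash {n N ν : ℕ} (hn : 0 < n) (hN : 0 < N) (hν : 0 < ν)
    (X : Fin N → Set (Fin n → ℝ))
    (hXne : ∀ i, (X i).Nonempty) (hXconv : ∀ i, Convex ℝ (X i))
    (hXcpt : ∀ i, IsCompact (X i))
    (Q C : Matrix (Fin n) (Fin n) ℝ) (hQ : Q.PosDef)
    (q : Fin N → ℝ) (hq : ∀ i, 0 < q i) (c : Fin N → Fin n → ℝ)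
    (P : Matrix (Fin N) (Fin N) ℝ) (hPnn : ∀ i j, 0 ≤ P i j)
    (hPrs : ∀ i, ∑ j, P i j = 1)
    (xstar : Fin N → (Fin n → ℝ) → (Fin n → ℝ))
    (hxstar : ∀ i, IsOptResp (X i) Q C (q i) (c i) (xstar i))
    (Xbig : Set (Fin n → ℝ)) (hXbigconv : Convex ℝ Xbig) (hXbigcpt : IsCompact Xbig)
    (hXsub : ∀ i, X i ⊆ Xbig)
    (D : ℝ) (hD : ∀ x ∈ Xbig, eunorm x ≤ D)
    (Lx : ℝ) (hLx0 : 0 < Lx)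
    (hLx : ∀ i, ∀ z w : Fin n → ℝ, eunorm (xstar i z - xstar i w) ≤ Lx * eunorm (z - w))
    (LJ : ℝ) (hLJ0 : 0 < LJ)
    (hLJ : ∀ i, ∀ xa ∈ Xbig, ∀ xb ∈ Xbig, ∀ za ∈ Xbig, ∀ zb ∈ Xbig,
      |cost Q C (q i) (c i) xa za - cost Q C (q i) (c i) xb zb|
        ≤ LJ * (eunorm (xa - xb) + eunorm (za - zb)))
    (zbar : Fin N × Fin n → ℝ) (hfix : aggMap P ν xstar zbar = zbar)
    (xbar : Fin N → Fin n → ℝ)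
    (hxbar : ∀ i, xbar i = xstar i (fun j => zbar (i, j))) :
    ∀ i, ∀ y ∈ X i,
      cost Q C (q i) (c i) (xbar i) ((N : ℝ)⁻¹ • ∑ j, xbar j)
        ≤ cost Q C (q i) (c i) y
            ((N : ℝ)⁻¹ • (y + ∑ j ∈ Finset.univ.erase i, xbar j))
          + 2 * LJ * (Lx + 1) * D * (rowSumNorm (P ^ ν - avgMat N) + (N : ℝ)⁻¹) :=
  fixedPoint_is_eps_MF_Nash_general X Q C q c P hPnn hPrs xstar hxstar Xbig hXbigconv hXsub D hD Lx
    hLx0 LJ hLJ0 hLJ zbar hfix xbar hxbar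
end
end

section
/- Suppose that for every i the matrix M_i := [[q_i Q, −C],[−Cᵀ, q_i Q]] ∈ ℝ^{2n×2n} is symmetric positive semidefinite, and that the spectral norm of P satisfies ‖P‖₂ ≤ 1. Fix λ ∈ (0,1). Then for any initial vector z_0 ∈ ℝ^{Nn} the Krasnoselskij iteration z_{k+1} := (1−λ) z_k + λ A_ν(z_k) converges as k → ∞ to a fixed point of A_ν. (Theorem 3, statement 2.) -/
open Matrix Filter Topology Finset
open scoped Kronecker

noncomputable section

/-!
Each optimal response is nonexpansive for the `Q`-norm: adding the first-order optimality
conditions at two parameters and testing `M_i ⪰ 0` against `(x⋆(z₁) - x⋆(z₂), z₂ - z₁)` gives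
`‖x⋆(z₁) - x⋆(z₂)‖_Q ≤ ‖z₁ - z₂‖_Q`. Since `‖P‖₂ ≤ 1`, the matrix `(1 - (P^ν)ᵀP^ν) ⊗ Q` is
positive semidefinite, so the mixing `P^ν ⊗ I` is nonexpansive for the `I ⊗ Q`-norm as well.
Hence `A_ν` is nonexpansive with bounded range for a Euclidean norm.

For such a map `T` on a finite-dimensional Hilbert space, the fixed points of the contractions
`t • T`, `t ↑ 1`, are approximate fixed points of `T` in a compact ball, so `T` has a fixed point.
The Krasnoselskij iterates are Fejér monotone with respect to every fixed point, and
`‖z_{k+1} - p‖² ≤ ‖z_k - p‖² - λ(1-λ)‖z_k - T z_k‖²` makes the residual tend to zero; a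
cluster point of the bounded sequence is then a fixed point, and Fejér monotonicity with respect
to it upgrades subsequential convergence to convergence.
-/

open Bornology Metric Set

theorem tendsto_nhds_zero_of_le_sub_succ {a r : ℕ → ℝ} (ha : ∀ k, 0 ≤ a k) (hr : ∀ k, 0 ≤ r k)
    (h : ∀ k, r k ≤ a k - a (k + 1)) : Tendsto r atTop (𝓝 0) := by
  have hanti : Antitone a := antitone_nat_of_succ_le fun k => by linarith [h k, hr k]
  have hlim := tendsto_atTop_ciInf hanti ⟨0, by rintro _ ⟨k, rfl⟩; exact ha k⟩
  refine squeeze_zero hr h ?_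
  simpa using hlim.sub (hlim.comp (tendsto_add_atTop_nat 1))

theorem tendsto_of_antitone_dist_of_tendsto_subseq {α : Type*} [PseudoMetricSpace α]
    {u : ℕ → α} {p : α} (hu : Antitone fun k => dist (u k) p) {φ : ℕ → ℕ} (hφ : StrictMono φ)
    (hlim : Tendsto (u ∘ φ) atTop (𝓝 p)) : Tendsto u atTop (𝓝 p) := by
  have hinf := tendsto_atTop_ciInf hu ⟨0, by rintro _ ⟨k, rfl⟩; exact dist_nonneg⟩
  have hzero : ⨅ k, dist (u k) p = 0 :=
    tendsto_nhds_unique (hinf.comp hφ.tendsto_atTop) (tendsto_iff_dist_tendsto_zero.1 hlim)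
  exact tendsto_iff_dist_tendsto_zero.2 (hzero ▸ hinf)

theorem nonneg_of_forall_mul_add_sq_mul_nonneg {a b : ℝ}
    (h : ∀ t ∈ Ioc (0 : ℝ) 1, 0 ≤ t * b + t ^ 2 * a) : 0 ≤ b := by
  have hlim : Tendsto (fun t : ℝ => b + t * a) (𝓝[>] 0) (𝓝 b) := by
    have : Tendsto (fun t : ℝ => b + t * a) (𝓝 0) (𝓝 (b + 0 * a)) :=
      (continuous_const.add (continuous_id.mul continuous_const)).tendsto 0
    simpa using this.mono_left nhdsWithin_le_nhds
  refine ge_of_tendsto hlim ?_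
  filter_upwards [Ioc_mem_nhdsGT zero_lt_one] with t ht
  exact (mul_nonneg_iff_of_pos_left ht.1).1 (by linear_combination h t ht)

section Krasnoselskij

variable {E : Type*} [NormedAddCommGroup E] [InnerProductSpace ℝ E]

def krasnoselskijStep {V : Type*} [AddCommGroup V] [Module ℝ V] (lam : ℝ) (T : V → V) (z : V) :
    V :=
  (1 - lam) • z + lam • T z

theorem norm_one_sub_smul_add_smul_sq (t : ℝ) (a b : E) :
    ‖(1 - t) • a + t • b‖ ^ 2 = (1 - t) * ‖a‖ ^ 2 + t * ‖b‖ ^ 2 - t * (1 - t) * ‖a - b‖ ^ 2 := by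
  simp only [← real_inner_self_eq_norm_sq, inner_add_left, inner_add_right, inner_sub_left,
    inner_sub_right, real_inner_smul_left, real_inner_smul_right, real_inner_comm a b]
  ring

theorem norm_krasnoselskijStep_sub_sq_le {T : E → E} (hT : LipschitzWith 1 T) {p : E}
    (hp : T p = p) {lam : ℝ} (h0 : 0 ≤ lam) (z : E) :
    ‖krasnoselskijStep lam T z - p‖ ^ 2 ≤ ‖z - p‖ ^ 2 - lam * (1 - lam) * ‖z - T z‖ ^ 2 := by
  have hdecomp : krasnoselskijStep lam T z - p = (1 - lam) • (z - p) + lam • (T z - p) := by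
    simp only [krasnoselskijStep, smul_sub, sub_smul, one_smul]
    abel
  have hTz : ‖T z - p‖ ≤ ‖z - p‖ := by
    simpa [hp] using hT.norm_sub_le z p
  rw [hdecomp, norm_one_sub_smul_add_smul_sq, sub_sub_sub_cancel_right]
  have : lam * ‖T z - p‖ ^ 2 ≤ lam * ‖z - p‖ ^ 2 := by gcongr
  linarith

theorem exists_fixedPoint_of_lipschitzWith_one {F : Type*} [NormedAddCommGroup F]
    [NormedSpace ℝ F] [ProperSpace F] {T : F → F} (hT : LipschitzWith 1 T)
    (hbdd : IsBounded (range T)) : ∃ p, T p = p := by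
  obtain ⟨B, hB⟩ := hbdd.exists_norm_le
  have hTB : ∀ x, ‖T x‖ ≤ B := fun x => hB _ (mem_range_self x)
  have happrox : ∀ t ∈ Ioo (0 : ℝ) 1, ∃ x ∈ closedBall (0 : F) B, ‖x - T x‖ ≤ (1 - t) * B := by
    rintro t ⟨ht0, ht1⟩
    have hcontr : ContractingWith ⟨t, ht0.le⟩ (fun x => t • T x) := by
      refine ⟨by exact_mod_cast ht1, ?_⟩
      have h := (lipschitzWith_smul (β := F) t).comp hT
      rwa [mul_one, Real.nnnorm_of_nonneg ht0.le] at h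
    obtain ⟨x, hx, -⟩ := hcontr.exists_fixedPoint 0 (edist_ne_top _ _)
    have hx : x = t • T x := hx.symm
    refine ⟨x, ?_, ?_⟩
    · rw [mem_closedBall_zero_iff, hx, norm_smul, Real.norm_of_nonneg ht0.le]
      nlinarith [hTB x, norm_nonneg (T x)]
    · have : x - T x = (1 - t) • -T x := by nth_rw 1 [hx]; module
      rw [this, norm_smul, norm_neg, Real.norm_of_nonneg (by linarith)]
      exact mul_le_mul_of_nonneg_left (hTB x) (by linarith)
  obtain ⟨x, hx, -⟩ := happrox (1 / 2) ⟨by norm_num, by norm_num⟩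
  have hcont : Continuous fun x => ‖x - T x‖ := (continuous_id.sub hT.continuous).norm
  obtain ⟨p, -, hp⟩ :=
    (isCompact_closedBall (0 : F) B).exists_isMinOn ⟨x, hx⟩ hcont.continuousOn
  have hlim : Tendsto (fun t : ℝ => (1 - t) * B) (𝓝[<] 1) (𝓝 0) := by
    have : Tendsto (fun t : ℝ => (1 - t) * B) (𝓝 1) (𝓝 ((1 - 1) * B)) :=
      ((continuous_const.sub continuous_id).mul continuous_const).tendsto 1
    simpa using this.mono_left nhdsWithin_le_nhds
  have hp0 : ‖p - T p‖ ≤ 0 := by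
    refine ge_of_tendsto hlim ?_
    filter_upwards [Ioo_mem_nhdsLT (show (0 : ℝ) < 1 by norm_num)] with t ht
    obtain ⟨x, hx, hxt⟩ := happrox t ht
    exact (hp hx).trans hxt
  exact ⟨p, (sub_eq_zero.1 (norm_le_zero_iff.1 hp0)).symm⟩

theorem exists_tendsto_krasnoselskijStep_iterate [ProperSpace E] {T : E → E}
    (hT : LipschitzWith 1 T) (hfix : ∃ p, T p = p) {lam : ℝ} (h0 : 0 < lam) (h1 : lam < 1)
    (z0 : E) : ∃ zbar, T zbar = zbar ∧
      Tendsto (fun k => (krasnoselskijStep lam T)^[k] z0) atTop (𝓝 zbar) := by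
  set z : ℕ → E := fun k => (krasnoselskijStep lam T)^[k] z0
  have hc : 0 < lam * (1 - lam) := mul_pos h0 (by linarith)
  have hfejer : ∀ q, T q = q → ∀ k,
      ‖z (k + 1) - q‖ ^ 2 ≤ ‖z k - q‖ ^ 2 - lam * (1 - lam) * ‖z k - T (z k)‖ ^ 2 := by
    intro q hq k
    rw [show z (k + 1) = _ from Function.iterate_succ_apply' _ k z0]
    exact norm_krasnoselskijStep_sub_sq_le hT hq h0.le (z k)
  have hanti : ∀ q, T q = q → Antitone fun k => dist (z k) q := by
    refine fun q hq => antitone_nat_of_succ_le fun k => ?_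
    simp only [dist_eq_norm]
    refine pow_le_pow_iff_left₀ (norm_nonneg _) (norm_nonneg _) two_ne_zero |>.1 ?_
    nlinarith [hfejer q hq k, sq_nonneg ‖z k - T (z k)‖]
  set g : E → ℝ := fun x => lam * (1 - lam) * ‖x - T x‖ ^ 2
  obtain ⟨p, hp⟩ := hfix
  have hres : Tendsto (g ∘ z) atTop (𝓝 0) :=
    tendsto_nhds_zero_of_le_sub_succ (fun k => sq_nonneg ‖z k - p‖)
      (fun k => mul_nonneg hc.le (sq_nonneg _)) fun k => by
        simp only [Function.comp_apply, g]; linarith [hfejer p hp k]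
  have hbdd : ∀ k, z k ∈ closedBall p (dist z0 p) := fun k => hanti p hp (Nat.zero_le k)
  obtain ⟨zbar, -, φ, hφ, hlim⟩ := tendsto_subseq_of_bounded isBounded_closedBall hbdd
  have hg : Continuous g :=
    continuous_const.mul ((continuous_id.sub hT.continuous).norm.pow 2)
  have hzbar : T zbar = zbar := by
    have : g zbar = 0 := tendsto_nhds_unique ((hg.tendsto zbar).comp hlim)
      (hres.comp hφ.tendsto_atTop)
    simpa [g, hc.ne', sub_eq_zero, eq_comm] using this
  exact ⟨zbar, hzbar, tendsto_of_antitone_dist_of_tendsto_subseq (hanti zbar hzbar) hφ hlim⟩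

theorem krasnoselskijStep_semiconj {F : Type*} [AddCommGroup F] [Module ℝ F] (L : F ≃ₗ[ℝ] E)
    (lam : ℝ) (T : F → F) :
    Function.Semiconj L (krasnoselskijStep lam T) (krasnoselskijStep lam (L ∘ T ∘ L.symm)) := by
  intro z
  simp [krasnoselskijStep]

theorem ContinuousLinearEquiv.exists_tendsto_krasnoselskijStep_iterate [ProperSpace E]
    {F : Type*} [NormedAddCommGroup F] [NormedSpace ℝ F] (L : F ≃L[ℝ] E) {T : F → F}
    (hT : ∀ u v, ‖L (T u) - L (T v)‖ ≤ ‖L u - L v‖) (hbdd : IsBounded (range T)) {lam : ℝ}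
    (h0 : 0 < lam) (h1 : lam < 1) (z0 : F) : ∃ zbar, T zbar = zbar ∧
      Tendsto (fun k => (krasnoselskijStep lam T)^[k] z0) atTop (𝓝 zbar) := by
  set T' : E → E := L ∘ T ∘ L.symm
  have hT' : LipschitzWith 1 T' := LipschitzWith.of_dist_le_mul fun a b => by
    simpa [T', dist_eq_norm] using hT (L.symm a) (L.symm b)
  have hbdd' : IsBounded (range T') := by
    refine (L.lipschitz.isBounded_image hbdd).subset ?_
    rintro _ ⟨a, rfl⟩
    exact ⟨_, mem_range_self _, rfl⟩
  obtain ⟨ybar, hfix, hlim⟩ := _root_.exists_tendsto_krasnoselskijStep_iterate hT'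
    (exists_fixedPoint_of_lipschitzWith_one hT' hbdd') h0 h1 (L z0)
  refine ⟨L.symm ybar, by simpa [T'] using congrArg L.symm hfix, ?_⟩
  have hiter : ∀ k, (krasnoselskijStep lam T)^[k] z0
      = L.symm ((krasnoselskijStep lam T')^[k] (L z0)) := fun k => by
    rw [L.eq_symm_apply]
    exact (krasnoselskijStep_semiconj L.toLinearEquiv lam T).iterate_right k z0
  exact ((L.symm.continuous.tendsto ybar).comp hlim).congr fun k => (hiter k).symm

end Krasnoselskij

open scoped MatrixOrder in
theorem Matrix.PosDef.exists_continuousLinearEquiv_norm_eq_wnorm {ι : Type*} [Fintype ι]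
    [DecidableEq ι] {S : Matrix ι ι ℝ} (hS : S.PosDef) :
    ∃ L : (ι → ℝ) ≃L[ℝ] EuclideanSpace ℝ ι, ∀ x, ‖L x‖ = wnorm S x := by
  obtain ⟨a, rfl⟩ := CStarAlgebra.nonneg_iff_eq_star_mul_self.mp hS.posSemidef.nonneg
  have ha : IsUnit a := by
    have h := hS.isUnit
    rw [isUnit_iff_isUnit_det, det_mul] at h
    rw [isUnit_iff_isUnit_det]
    exact isUnit_of_mul_isUnit_right h
  let L : (ι → ℝ) ≃ₗ[ℝ] EuclideanSpace ℝ ι :=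
    (a.toLinearEquiv' ha.invertible).trans (WithLp.linearEquiv 2 ℝ (ι → ℝ)).symm
  refine ⟨L.toContinuousLinearEquiv, fun x => ?_⟩
  rw [wnorm, norm_eq_sqrt_real_inner, ← mulVec_mulVec, star_eq_conjTranspose,
    conjTranspose_eq_transpose_of_trivial, mulVec_transpose, dotProduct_comm, ← dotProduct_mulVec]
  rfl

section Contraction

variable {ι κ : Type*} [Fintype ι] [DecidableEq ι] [Fintype κ] [DecidableEq κ]

theorem posSemidef_one_sub_conjTranspose_mul_self_of_specNorm_le_one {A : Matrix ι ι ℝ}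
    (hA : specNorm A ≤ 1) : (1 - Aᴴ * A).PosSemidef := by
  refine .of_dotProduct_mulVec_nonneg
    (isHermitian_one.sub (isHermitian_conjTranspose_mul_self A)) fun x => ?_
  have hle : ‖WithLp.toLp 2 (A *ᵥ x)‖ ≤ ‖WithLp.toLp 2 x‖ :=
    ((LinearMap.toContinuousLinearMap (toEuclideanLin A)).le_opNorm (WithLp.toLp 2 x)).trans
      (mul_le_of_le_one_left (norm_nonneg _) hA)
  have hsq := pow_le_pow_left₀ (norm_nonneg _) hle 2
  rw [← real_inner_self_eq_norm_sq, ← real_inner_self_eq_norm_sq,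
    EuclideanSpace.inner_toLp_toLp, EuclideanSpace.inner_toLp_toLp] at hsq
  simp only [star_trivial, sub_mulVec, one_mulVec, dotProduct_sub, ← mulVec_mulVec,
    dotProduct_mulVec x, vecMul_conjTranspose]
  simpa [dotProduct_comm] using hsq

theorem Matrix.PosSemidef.one_sub_conjTranspose_pow_mul_pow {A : Matrix ι ι ℝ}
    (hA : (1 - Aᴴ * A).PosSemidef) (k : ℕ) : (1 - (A ^ k)ᴴ * A ^ k).PosSemidef := by
  induction k with
  | zero => simpa using PosSemidef.zero
  | succ k ih =>
    convert hA.add (ih.conjTranspose_mul_mul_same A) using 1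
    rw [pow_succ, conjTranspose_mul]
    noncomm_ring

theorem wnorm_kronecker_one_mulVec_le {A : Matrix ι ι ℝ} {Q : Matrix κ κ ℝ}
    (hA : (1 - Aᴴ * A).PosSemidef) (hQ : Q.PosSemidef) (y : ι × κ → ℝ) :
    wnorm (1 ⊗ₖ Q) ((A ⊗ₖ 1) *ᵥ y) ≤ wnorm (1 ⊗ₖ Q) y := by
  have e : (1 - Aᴴ * A) ⊗ₖ Q = 1 ⊗ₖ Q - (A ⊗ₖ 1)ᴴ * (1 ⊗ₖ Q) * (A ⊗ₖ 1) := by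
    rw [conjTranspose_kronecker, conjTranspose_one, ← mul_kronecker_mul, ← mul_kronecker_mul,
      mul_one, one_mul, mul_one]
    exact eq_sub_of_add_eq (by rw [← add_kronecker, sub_add_cancel])
  have h := (hA.kronecker hQ).dotProduct_mulVec_nonneg y
  rw [e, sub_mulVec, dotProduct_sub, ← mulVec_mulVec, ← mulVec_mulVec, star_trivial,
    conjTranspose_eq_transpose_of_trivial, dotProduct_mulVec y (A ⊗ₖ 1)ᵀ, vecMul_transpose] at h
  exact Real.sqrt_le_sqrt (by linarith)

end Contraction

section OptimalResponse

variable {n : ℕ} {X : Set (Fin n → ℝ)} {Q C : Matrix (Fin n) (Fin n) ℝ} {qi : ℝ}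
  {ci : Fin n → ℝ} {xst : (Fin n → ℝ) → (Fin n → ℝ)}

theorem IsOptResp.variational_inequality (h : IsOptResp X Q C qi ci xst) (hX : Convex ℝ X)
    (z : Fin n → ℝ) {y : Fin n → ℝ} (hy : y ∈ X) :
    0 ≤ qi * (xst z ⬝ᵥ Q *ᵥ (y - xst z) + (y - xst z) ⬝ᵥ Q *ᵥ xst z)
      + 2 * ((C *ᵥ z + ci) ⬝ᵥ (y - xst z)) := by
  obtain ⟨hx, hmin⟩ := h z
  set x := xst z
  refine nonneg_of_forall_mul_add_sq_mul_nonneg (a := qi * ((y - x) ⬝ᵥ Q *ᵥ (y - x)))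
    fun t ht => ?_
  have hmem : x + t • (y - x) ∈ X := by
    convert hX hx hy (by linarith [ht.2] : 0 ≤ 1 - t) ht.1.le (by ring) using 1
    module
  have hle := hmin _ hmem
  simp only [cost, mulVec_add, mulVec_smul, dotProduct_add, add_dotProduct, dotProduct_smul,
    smul_dotProduct, smul_eq_mul] at hle ⊢
  linear_combination hle

theorem IsOptResp.dotProduct_sub_mulVec_sub_le (h : IsOptResp X Q C qi ci xst)
    (hX : Convex ℝ X) (hq : 0 < qi)
    (hM : (fromBlocks (qi • Q) (-C) (-Cᵀ) (qi • Q)).PosSemidef) (z₁ z₂ : Fin n → ℝ) :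
    (xst z₁ - xst z₂) ⬝ᵥ Q *ᵥ (xst z₁ - xst z₂) ≤ (z₁ - z₂) ⬝ᵥ Q *ᵥ (z₁ - z₂) := by
  have hmono : qi * ((xst z₁ - xst z₂) ⬝ᵥ Q *ᵥ (xst z₁ - xst z₂))
      + (C *ᵥ (z₁ - z₂)) ⬝ᵥ (xst z₁ - xst z₂) ≤ 0 := by
    have e₁ := h.variational_inequality hX z₁ (h z₂).1
    have e₂ := h.variational_inequality hX z₂ (h z₁).1
    simp only [mulVec_sub, dotProduct_sub, sub_dotProduct, add_dotProduct] at e₁ e₂ ⊢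
    linarith
  have hpsd := hM.dotProduct_mulVec_nonneg (Sum.elim (xst z₁ - xst z₂) (-(z₁ - z₂)))
  have hCt : (z₁ - z₂) ⬝ᵥ Cᵀ *ᵥ (xst z₁ - xst z₂) = (C *ᵥ (z₁ - z₂)) ⬝ᵥ (xst z₁ - xst z₂) := by
    rw [mulVec_transpose, dotProduct_comm, ← dotProduct_mulVec, dotProduct_comm]
  simp only [star_trivial, fromBlocks_mulVec, sumElim_dotProduct_sumElim, Sum.elim_comp_inl,
    Sum.elim_comp_inr, smul_mulVec, neg_mulVec, mulVec_neg, dotProduct_add, dotProduct_neg,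
    neg_dotProduct, neg_neg, dotProduct_smul, smul_eq_mul, hCt, dotProduct_comm _ (C *ᵥ _)] at hpsd
  exact le_of_mul_le_mul_left (by linarith) hq

end OptimalResponse

theorem dotProduct_one_kronecker_mulVec {ι κ : Type*} [Fintype ι] [DecidableEq ι] [Fintype κ]
    (Q : Matrix κ κ ℝ) (w : ι × κ → ℝ) :
    w ⬝ᵥ (1 ⊗ₖ Q) *ᵥ w = ∑ i, (fun j => w (i, j)) ⬝ᵥ Q *ᵥ fun j => w (i, j) := by
  simp [dotProduct, mulVec, Fintype.sum_prod_type, one_apply, ite_mul, Finset.mul_sum]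

section Aggregation

variable {n N : ℕ} {Q : Matrix (Fin n) (Fin n) ℝ}
  {xstar : Fin N → (Fin n → ℝ) → (Fin n → ℝ)}

theorem wnorm_extMap_sub_le (h : ∀ i z₁ z₂, (xstar i z₁ - xstar i z₂) ⬝ᵥ Q *ᵥ
      (xstar i z₁ - xstar i z₂) ≤ (z₁ - z₂) ⬝ᵥ Q *ᵥ (z₁ - z₂))
    (u v : Fin N × Fin n → ℝ) :
    wnorm (1 ⊗ₖ Q) (extMap xstar u - extMap xstar v) ≤ wnorm (1 ⊗ₖ Q) (u - v) := by
  refine Real.sqrt_le_sqrt ?_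
  rw [dotProduct_one_kronecker_mulVec, dotProduct_one_kronecker_mulVec]
  exact Finset.sum_le_sum fun i _ => h i (fun j => u (i, j)) (fun j => v (i, j))

theorem wnorm_aggMap_sub_le {P : Matrix (Fin N) (Fin N) ℝ} {ν : ℕ}
    (hP : (1 - (P ^ ν)ᴴ * P ^ ν).PosSemidef) (hQ : Q.PosSemidef)
    (h : ∀ i z₁ z₂, (xstar i z₁ - xstar i z₂) ⬝ᵥ Q *ᵥ
      (xstar i z₁ - xstar i z₂) ≤ (z₁ - z₂) ⬝ᵥ Q *ᵥ (z₁ - z₂))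
    (u v : Fin N × Fin n → ℝ) :
    wnorm (1 ⊗ₖ Q) (aggMap P ν xstar u - aggMap P ν xstar v) ≤ wnorm (1 ⊗ₖ Q) (u - v) := by
  rw [aggMap, aggMap, ← mulVec_sub]
  exact (wnorm_kronecker_one_mulVec_le hP hQ _).trans (wnorm_extMap_sub_le h u v)

theorem isBounded_range_aggMap (P : Matrix (Fin N) (Fin N) ℝ) (ν : ℕ)
    {X : Fin N → Set (Fin n → ℝ)} (hX : ∀ i, IsCompact (X i)) (hmem : ∀ i z, xstar i z ∈ X i) :
    IsBounded (range (aggMap P ν xstar)) := by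
  have hext : IsBounded (range (extMap xstar)) := by
    refine forall_isBounded_image_eval_iff.1 fun p => ?_
    refine ((hX p.1).image (continuous_apply p.2)).isBounded.subset ?_
    rintro _ ⟨_, ⟨z, rfl⟩, rfl⟩
    exact ⟨_, hmem p.1 _, rfl⟩
  have : range (aggMap P ν xstar) = ((P ^ ν) ⊗ₖ 1).mulVecLin '' range (extMap xstar) := by
    rw [← range_comp]
    rfl
  rw [this]
  exact (LinearMap.toContinuousLinearMap _).lipschitz.isBounded_image hext

end Aggregation

theorem krasnoselskij_converges_general {n N ν : ℕ}
    (X : Fin N → Set (Fin n → ℝ))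
    (hXconv : ∀ i, Convex ℝ (X i))
    (hXcpt : ∀ i, IsCompact (X i))
    (Q C : Matrix (Fin n) (Fin n) ℝ) (hQ : Q.PosDef)
    (q : Fin N → ℝ) (hq : ∀ i, 0 < q i) (c : Fin N → Fin n → ℝ)
    (P : Matrix (Fin N) (Fin N) ℝ)
    (hM : ∀ i, (Matrix.fromBlocks (q i • Q) (-C) (-Cᵀ) (q i • Q)).PosSemidef)
    (hP2 : specNorm P ≤ 1)
    (lam : ℝ) (hlam : 0 < lam ∧ lam < 1)
    (xstar : Fin N → (Fin n → ℝ) → (Fin n → ℝ))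
    (hxstar : ∀ i, IsOptResp (X i) Q C (q i) (c i) (xstar i)) :
    ∀ z0 : Fin N × Fin n → ℝ, ∃ zbar : Fin N × Fin n → ℝ,
      aggMap P ν xstar zbar = zbar ∧
      Tendsto
        (fun k => (fun z => (1 - lam) • z + lam • aggMap P ν xstar z)^[k] z0)
        atTop (𝓝 zbar) := by
  intro z0
  have hW : ((1 : Matrix (Fin N) (Fin N) ℝ) ⊗ₖ Q).PosDef := PosDef.one.kronecker hQ
  obtain ⟨L, hL⟩ := hW.exists_continuousLinearEquiv_norm_eq_wnorm
  have hPν : (1 - (P ^ ν)ᴴ * P ^ ν).PosSemidef :=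
    posSemidef_one_sub_conjTranspose_mul_self_of_specNorm_le_one hP2
      |>.one_sub_conjTranspose_pow_mul_pow ν
  have hnonexp : ∀ u v, ‖L (aggMap P ν xstar u) - L (aggMap P ν xstar v)‖ ≤ ‖L u - L v‖ := by
    intro u v
    rw [← map_sub, ← map_sub, hL, hL]
    exact wnorm_aggMap_sub_le hPν hQ.posSemidef
      (fun i => (hxstar i).dotProduct_sub_mulVec_sub_le (hXconv i) (hq i) (hM i)) u v
  exact L.exists_tendsto_krasnoselskijStep_iterate hnonexp
    (isBounded_range_aggMap P ν hXcpt fun i z => (hxstar i z).1) hlam.1 hlam.2 z0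

/-- Theorem 3, case 2: if each `M_i ⪰ 0` and `‖P‖₂ ≤ 1`, then the
Krasnoselskij iteration converges to a fixed point of `A_ν` from any start. -/
theorem krasnoselskij_converges {n N ν : ℕ} (hn : 0 < n) (hN : 0 < N) (hν : 0 < ν)
    (X : Fin N → Set (Fin n → ℝ))
    (hXne : ∀ i, (X i).Nonempty) (hXconv : ∀ i, Convex ℝ (X i))
    (hXcpt : ∀ i, IsCompact (X i))
    (Q C : Matrix (Fin n) (Fin n) ℝ) (hQ : Q.PosDef)
    (q : Fin N → ℝ) (hq : ∀ i, 0 < q i) (c : Fin N → Fin n → ℝ)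
    (P : Matrix (Fin N) (Fin N) ℝ) (hPnn : ∀ i j, 0 ≤ P i j)
    (hPrs : ∀ i, ∑ j, P i j = 1)
    (hM : ∀ i, (Matrix.fromBlocks (q i • Q) (-C) (-Cᵀ) (q i • Q)).PosSemidef)
    (hP2 : specNorm P ≤ 1)
    (lam : ℝ) (hlam : 0 < lam ∧ lam < 1)
    (xstar : Fin N → (Fin n → ℝ) → (Fin n → ℝ))
    (hxstar : ∀ i, IsOptResp (X i) Q C (q i) (c i) (xstar i)) :
    ∀ z0 : Fin N × Fin n → ℝ, ∃ zbar : Fin N × Fin n → ℝ,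
      aggMap P ν xstar zbar = zbar ∧
      Tendsto
        (fun k => (fun z => (1 - lam) • z + lam • aggMap P ν xstar z)^[k] z0)
        atTop (𝓝 zbar) :=
  krasnoselskij_converges_general X hXconv hXcpt Q C hQ q hq c P hM hP2 lam hlam xstar hxstar
end
end

section
/- Consider the constrained opinion-dynamics game: each agent i has a nonempty convex compact set X^i ⊂ ℝ^n, an initial opinion x^i_{(0)} ∈ ℝ^n, and a stubbornness parameter θ_i > 0, and given the opinions (x^j)_{j≠i} it selects argmin_{x ∈ X^i} [ Σ_{j≠i} P_{ij} ‖x − x^j‖² + θ_i ‖x − x^i_{(0)}‖² ]. Suppose P ∈ ℝ^{N×N} is entrywise nonnegative and row stochastic with P_{ii} = 0 for all i, and the spectral norm satisfies ‖P‖₂ ≤ 1. Then from any initial opinions, the synchronous best-response dynamics x^i_{(k+1)} := argmin_{x∈X^i}[ Σ_{j≠i} P_{ij} ‖x − x^j_{(k)}‖² + θ_i ‖x − x^i_{(0)}‖² ] converge as k → ∞ to limits (x̄^i)_{i=1}^N forming a Nash equilibrium: for every i, x̄^i minimizes y ↦ Σ_{j≠i} P_{ij} ‖y − x̄^j‖²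 + θ_i ‖y − x^i_{(0)}‖² over X^i. (Corollary 2, case 1.) -/
open Matrix Filter Topology Finset
open scoped Kronecker

noncomputable section

/-- Opinion-dynamics cost of agent `i` choosing `y` given opinions `x`:
`Σ_{j≠i} P_{ij}‖y − x^j‖² + θ_i‖y − x^i_{(0)}‖²`. -/
def opCost {n N : ℕ} (P : Matrix (Fin N) (Fin N) ℝ) (θ : Fin N → ℝ)
    (x0 : Fin N → Fin n → ℝ) (i : Fin N) (y : Fin n → ℝ)
    (x : Fin N → Fin n → ℝ) : ℝ :=
  (∑ j ∈ Finset.univ.erase i, P i j * ((y - x j) ⬝ᵥ (y - x j)))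
    + θ i * ((y - x0 i) ⬝ᵥ (y - x0 i))

/-!
Since `∑_{j ≠ i} P i j = 1`, agent `i`'s cost is `(1 + θ i) ‖y - tᵢ(x)‖²` plus a term not
depending on `y`, where `tᵢ(x) = (∑_{j ≠ i} P i j x^j + θ i x0 i) / (1 + θ i)`. So the best
response is the metric projection of `tᵢ(x)` onto the convex set `X i`. Projections onto convex
sets are 1-Lipschitz, and `tᵢ` is `(1 + θ i)⁻¹`-Lipschitz for the maximum over agents of the
Euclidean distances; hence the best-response map is a contraction for that metric, and Banach's
fixed point theorem makes its iterates converge to a fixed point, i.e. to a Nash equilibrium.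
-/

open scoped RealInnerProductSpace NNReal

section InnerProductSpace

variable {F : Type*} [NormedAddCommGroup F] [InnerProductSpace ℝ F]

theorem norm_sub_le_of_isMinOn_norm_sub {K : Set F} (hK : Convex ℝ K) {u u' v v' : F}
    (hu : u ∈ K) (hu' : u' ∈ K) (hmin : IsMinOn (fun w => ‖v - w‖) K u)
    (hmin' : IsMinOn (fun w => ‖v' - w‖) K u') :
    ‖u - u'‖ ≤ ‖v - v'‖ := by
  have hvi := (norm_eq_iInf_iff_real_inner_le_zero hK hu).1 (hmin.iInf_eq hu).symm u' hu'
  have hvi' := (norm_eq_iInf_iff_real_inner_le_zero hK hu').1 (hmin'.iInf_eq hu').symm u hu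
  have hsq : ‖u - u'‖ ^ 2 ≤ ‖v - v'‖ * ‖u - u'‖ := calc
    ‖u - u'‖ ^ 2 = ⟪v - v', u - u'⟫ + ⟪v - u, u' - u⟫ + ⟪v' - u', u - u'⟫ := by
      simp only [norm_sub_sq_real, inner_sub_left, inner_sub_right, real_inner_self_eq_norm_sq,
        real_inner_comm u u']
      ring
    _ ≤ ⟪v - v', u - u'⟫ := by linarith
    _ ≤ ‖v - v'‖ * ‖u - u'‖ := real_inner_le_norm _ _
  nlinarith [norm_nonneg (u - u'), norm_nonneg (v - v')]

theorem sum_mul_norm_sub_sq {ι : Type*} (s : Finset ι) (w : ι → ℝ) (p : ι → F) (y : F) :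
    ∑ j ∈ s, w j * ‖y - p j‖ ^ 2
      = (∑ j ∈ s, w j) * ‖y‖ ^ 2 - 2 * ⟪y, ∑ j ∈ s, w j • p j⟫ + ∑ j ∈ s, w j * ‖p j‖ ^ 2 := by
  simp only [norm_sub_sq_real, inner_sum, real_inner_smul_right, sum_mul, mul_sum, mul_add,
    mul_sub, ← sum_add_distrib, ← sum_sub_distrib]
  exact sum_congr rfl fun j _ => by ring

end InnerProductSpace

theorem norm_sum_smul_sub_sum_smul_le {ι E : Type*} [Fintype ι] [SeminormedAddCommGroup E]
    [NormedSpace ℝ E] (s : Finset ι) {w : ι → ℝ} (hw : ∀ j ∈ s, 0 ≤ w j) (z z' : ι → E) :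
    ‖∑ j ∈ s, w j • z j - ∑ j ∈ s, w j • z' j‖ ≤ (∑ j ∈ s, w j) * dist z z' := calc
  ‖∑ j ∈ s, w j • z j - ∑ j ∈ s, w j • z' j‖ = ‖∑ j ∈ s, w j • (z j - z' j)‖ := by
    simp only [smul_sub, sum_sub_distrib]
  _ ≤ ∑ j ∈ s, w j * ‖z j - z' j‖ := by
    refine (norm_sum_le _ _).trans_eq (sum_congr rfl fun j hj => ?_)
    rw [norm_smul, Real.norm_of_nonneg (hw j hj)]
  _ ≤ ∑ j ∈ s, w j * dist z z' := by
    refine sum_le_sum fun j hj => mul_le_mul_of_nonneg_left ?_ (hw j hj)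
    rw [← dist_eq_norm]
    exact dist_le_pi_dist z z' j
  _ = (∑ j ∈ s, w j) * dist z z' := (sum_mul _ _ _).symm

theorem exists_contractingWith_of_dist_apply_le {ι : Type*} [Fintype ι] {β : ι → Type*}
    [∀ i, MetricSpace (β i)] {f : (∀ i, β i) → ∀ i, β i} (k : ι → ℝ) (hk : ∀ i, k i < 1)
    (hf : ∀ x y i, dist (f x i) (f y i) ≤ k i * dist x y) : ∃ K, ContractingWith K f := by
  refine ⟨univ.sup fun i => (k i).toNNReal, ?_, LipschitzWith.of_dist_le_mul fun x y => ?_⟩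
  · exact (Finset.sup_lt_iff zero_lt_one).2 fun i _ => Real.toNNReal_lt_one.2 (hk i)
  · refine (dist_pi_le_iff (by positivity)).2 fun i => (hf x y i).trans ?_
    refine mul_le_mul_of_nonneg_right ((Real.le_coe_toNNReal _).trans ?_) dist_nonneg
    exact_mod_cast le_sup (f := fun i => (k i).toNNReal) (mem_univ i)

theorem ContractingWith.exists_isFixedPt_tendsto_iterate_of_conj {α β : Type*}
    [TopologicalSpace α] [MetricSpace β] [CompleteSpace β] (e : α ≃ₜ β) {f : α → α} {K : ℝ≥0}
    (hf : ContractingWith K (e ∘ f ∘ e.symm)) (x : α) :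
    ∃ x', Function.IsFixedPt f x' ∧ Tendsto (fun k => f^[k] x) atTop (𝓝 x') := by
  have : Nonempty β := ⟨e x⟩
  refine ⟨e.symm (hf.fixedPoint _), ?_, ?_⟩
  · simpa [Function.IsFixedPt] using congrArg e.symm hf.fixedPoint_isFixedPt
  · have hconj : Function.Semiconj e.symm (e ∘ f ∘ e.symm) f := fun y => by simp
    refine ((e.symm.continuous.tendsto _).comp (hf.tendsto_iterate_fixedPoint (e x))).congr
      fun k => ?_
    simp [hconj.iterate_right k (e x)]

theorem dotProduct_self_eq_norm_toLp_sq {ι : Type*} [Fintype ι] (a : ι → ℝ) :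
    a ⬝ᵥ a = ‖WithLp.toLp 2 a‖ ^ 2 := by
  rw [EuclideanSpace.real_norm_sq_eq]
  simp [dotProduct, sq]

section OpinionGame

variable {n N : ℕ} (P : Matrix (Fin N) (Fin N) ℝ) (θ : Fin N → ℝ) (x0 : Fin N → Fin n → ℝ)

def toPiEuclidean : (Fin N → Fin n → ℝ) ≃ₜ (Fin N → EuclideanSpace ℝ (Fin n)) :=
  Homeomorph.piCongrRight fun _ => (PiLp.homeomorph 2 _).symm

@[simp]
theorem toPiEuclidean_apply (x : Fin N → Fin n → ℝ) (j : Fin N) :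
    toPiEuclidean x j = WithLp.toLp 2 (x j) :=
  rfl

/-- The best response of agent `i` to `x` is the projection of this point onto `X i`. -/
def opTarget (i : Fin N) (x : Fin N → Fin n → ℝ) : EuclideanSpace ℝ (Fin n) :=
  (1 + θ i)⁻¹ • (∑ j ∈ univ.erase i, P i j • WithLp.toLp 2 (x j) + θ i • WithLp.toLp 2 (x0 i))

variable {P θ x0} {i : Fin N}

theorem exists_opCost_eq_norm_opTarget_sub_sq (hsum : ∑ j ∈ univ.erase i, P i j = 1)
    (hθ : 1 + θ i ≠ 0) (x : Fin N → Fin n → ℝ) :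
    ∃ c, ∀ y,
      opCost P θ x0 i y x = (1 + θ i) * ‖opTarget P θ x0 i x - WithLp.toLp 2 y‖ ^ 2 + c := by
  set p : Fin N → EuclideanSpace ℝ (Fin n) := fun j => WithLp.toLp 2 (x j)
  set z : EuclideanSpace ℝ (Fin n) := WithLp.toLp 2 (x0 i)
  set b := ∑ j ∈ univ.erase i, P i j • p j + θ i • z
  refine ⟨∑ j ∈ univ.erase i, P i j * ‖p j‖ ^ 2 + θ i * ‖z‖ ^ 2 - (1 + θ i)⁻¹ * ‖b‖ ^ 2,
    fun y => ?_⟩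
  set Y : EuclideanSpace ℝ (Fin n) := WithLp.toLp 2 y
  have hcost : opCost P θ x0 i y x
      = ∑ j ∈ univ.erase i, P i j * ‖Y - p j‖ ^ 2 + θ i * ‖Y - z‖ ^ 2 := by
    simp only [opCost, dotProduct_self_eq_norm_toLp_sq, WithLp.toLp_sub, Y, p, z]
  have hb : ⟪b, Y⟫ = ⟪Y, ∑ j ∈ univ.erase i, P i j • p j⟫ + θ i * ⟪Y, z⟫ := by
    rw [inner_add_left, real_inner_smul_left, real_inner_comm, real_inner_comm z]
  have htarget : opTarget P θ x0 i x = (1 + θ i)⁻¹ • b := rfl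
  rw [hcost, htarget, norm_sub_sq_real (_ • b), norm_smul, real_inner_smul_left, hb,
    sum_mul_norm_sub_sq, hsum, norm_sub_sq_real Y, mul_pow, Real.norm_eq_abs, sq_abs]
  field_simp
  ring

theorem isMinOn_norm_opTarget_sub (hsum : ∑ j ∈ univ.erase i, P i j = 1) (hθ : 0 < θ i)
    {X : Set (Fin n → ℝ)} {x : Fin N → Fin n → ℝ} {u : Fin n → ℝ}
    (hu : ∀ y ∈ X, opCost P θ x0 i u x ≤ opCost P θ x0 i y x) :
    IsMinOn (fun w => ‖opTarget P θ x0 i x - w‖) (WithLp.ofLp ⁻¹' X) (WithLp.toLp 2 u) := by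
  obtain ⟨c, hc⟩ := exists_opCost_eq_norm_opTarget_sub_sq (x0 := x0) hsum (by linarith) x
  refine isMinOn_iff.2 fun w hw => ?_
  have h := hu w.ofLp hw
  rw [hc, hc, WithLp.toLp_ofLp] at h
  have hsq : ‖opTarget P θ x0 i x - WithLp.toLp 2 u‖ ^ 2 ≤ ‖opTarget P θ x0 i x - w‖ ^ 2 :=
    le_of_mul_le_mul_left (by linarith) (by linarith : (0 : ℝ) < 1 + θ i)
  exact (pow_le_pow_iff_left₀ (norm_nonneg _) (norm_nonneg _) two_ne_zero).1 hsq

theorem norm_opTarget_sub_opTarget_le (hPnn : ∀ j, 0 ≤ P i j)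
    (hsum : ∑ j ∈ univ.erase i, P i j = 1) (hθ : 0 < θ i) (x x' : Fin N → Fin n → ℝ) :
    ‖opTarget P θ x0 i x - opTarget P θ x0 i x'‖
      ≤ (1 + θ i)⁻¹ * dist (toPiEuclidean x) (toPiEuclidean x') := by
  rw [opTarget, opTarget, ← smul_sub, add_sub_add_right_eq_sub, norm_smul,
    Real.norm_of_nonneg (by positivity)]
  gcongr
  simpa only [hsum, one_mul, toPiEuclidean_apply] using
    norm_sum_smul_sub_sum_smul_le (univ.erase i) (fun j _ => hPnn j) (toPiEuclidean x)
      (toPiEuclidean x')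

theorem dist_toLp_bestResponse_le {X : Set (Fin n → ℝ)} (hX : Convex ℝ X)
    (hPnn : ∀ j, 0 ≤ P i j) (hsum : ∑ j ∈ univ.erase i, P i j = 1) (hθ : 0 < θ i)
    {br : (Fin N → Fin n → ℝ) → Fin n → ℝ}
    (hbr : ∀ x, br x ∈ X ∧ ∀ y ∈ X, opCost P θ x0 i (br x) x ≤ opCost P θ x0 i y x)
    (x x' : Fin N → Fin n → ℝ) :
    dist (WithLp.toLp 2 (br x)) (WithLp.toLp 2 (br x'))
      ≤ (1 + θ i)⁻¹ * dist (toPiEuclidean x) (toPiEuclidean x') := by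
  rw [dist_eq_norm]
  refine le_trans ?_ (norm_opTarget_sub_opTarget_le (x0 := x0) hPnn hsum hθ x x')
  exact norm_sub_le_of_isMinOn_norm_sub
    (hX.linear_preimage (WithLp.linearEquiv 2 ℝ (Fin n → ℝ)).toLinearMap)
    (hbr x).1 (hbr x').1 (isMinOn_norm_opTarget_sub hsum hθ (hbr x).2)
    (isMinOn_norm_opTarget_sub hsum hθ (hbr x').2)

end OpinionGame

theorem opinion_BR_dynamics_converge_general {n N : ℕ}
    (X : Fin N → Set (Fin n → ℝ))
    (hXconv : ∀ i, Convex ℝ (X i))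
    (x0 : Fin N → Fin n → ℝ) (θ : Fin N → ℝ) (hθ : ∀ i, 0 < θ i)
    (P : Matrix (Fin N) (Fin N) ℝ) (hPnn : ∀ i j, 0 ≤ P i j)
    (hPrs : ∀ i, ∑ j, P i j = 1) (hdiag : ∀ i, P i i = 0)
    (br : (Fin N → Fin n → ℝ) → (Fin N → Fin n → ℝ))
    (hbr : ∀ x i, br x i ∈ X i ∧
      ∀ y ∈ X i, opCost P θ x0 i (br x i) x ≤ opCost P θ x0 i y x) :
    ∀ xinit : Fin N → Fin n → ℝ, ∃ xbar : Fin N → Fin n → ℝ,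
      Tendsto (fun k => br^[k] xinit) atTop (𝓝 xbar) ∧
      ∀ i, xbar i ∈ X i ∧
        ∀ y ∈ X i, opCost P θ x0 i (xbar i) xbar ≤ opCost P θ x0 i y xbar := by
  intro xinit
  have hsum (i : Fin N) : ∑ j ∈ univ.erase i, P i j = 1 := (sum_erase _ (hdiag i)).trans (hPrs i)
  obtain ⟨K, hcontr⟩ : ∃ K, ContractingWith K (toPiEuclidean ∘ br ∘ toPiEuclidean.symm) :=
    exists_contractingWith_of_dist_apply_le (fun i => (1 + θ i)⁻¹)
      (fun i => inv_lt_one_of_one_lt₀ (by linarith [hθ i])) fun z z' i => by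
        simpa using dist_toLp_bestResponse_le (hXconv i) (hPnn i) (hsum i) (hθ i)
          (fun x => hbr x i) (toPiEuclidean.symm z) (toPiEuclidean.symm z')
  obtain ⟨xbar, hfix, hlim⟩ := hcontr.exists_isFixedPt_tendsto_iterate_of_conj _ xinit
  refine ⟨xbar, hlim, fun i => ?_⟩
  simpa only [hfix.eq] using hbr xbar i

/-- Corollary 2, case 1: with all agents partially stubborn (`θ_i > 0`),
`P_{ii} = 0` and `‖P‖₂ ≤ 1`, the synchronous best-response opinion dynamics converge from
any initial opinions to a Nash equilibrium. -/
theorem opinion_BR_dynamics_converge {n N : ℕ} (hn : 0 < n) (hN : 0 < N)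
    (X : Fin N → Set (Fin n → ℝ))
    (hXne : ∀ i, (X i).Nonempty) (hXconv : ∀ i, Convex ℝ (X i))
    (hXcpt : ∀ i, IsCompact (X i))
    (x0 : Fin N → Fin n → ℝ) (θ : Fin N → ℝ) (hθ : ∀ i, 0 < θ i)
    (P : Matrix (Fin N) (Fin N) ℝ) (hPnn : ∀ i j, 0 ≤ P i j)
    (hPrs : ∀ i, ∑ j, P i j = 1) (hdiag : ∀ i, P i i = 0)
    (hP2 : specNorm P ≤ 1)
    (br : (Fin N → Fin n → ℝ) → (Fin N → Fin n → ℝ))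
    (hbr : ∀ x i, br x i ∈ X i ∧
      ∀ y ∈ X i, opCost P θ x0 i (br x i) x ≤ opCost P θ x0 i y x) :
    ∀ xinit : Fin N → Fin n → ℝ, ∃ xbar : Fin N → Fin n → ℝ,
      Tendsto (fun k => br^[k] xinit) atTop (𝓝 xbar) ∧
      ∀ i, xbar i ∈ X i ∧
        ∀ y ∈ X i, opCost P θ x0 i (xbar i) xbar ≤ opCost P θ x0 i y xbar :=
  opinion_BR_dynamics_converge_general X hXconv x0 θ hθ P hPnn hPrs hdiag br hbr
end
end
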